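/- arXiv:1902.06624 — 2 statements merged into one kernel-verified Lean document; each statement's English description precedes it below -/
import Mathlib

section
/- Let ω be a primitive n-th root of unity in a field F, let 1 ≤ r ≤ n, and let G be the r×n matrix consisting of r consecutive rows of the Fourier matrix F_n (rows a, a+1, ..., a+r-1 with indices mod n). Then every r×r submatrix of G (obtained by selecting any r distinct columns) is invertible; equivalently, the linear code generated by G is MDS with parameters (n, r, n-r+1). -/
/-! The chosen rows turn the minor on columns `c` into a Vandermonde matrix in the nodes
`ω ^ c j`, with column `j` scaled by `(ω ^ c j) ^ a`. The nodes are distinct because the `c j`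
are distinct and smaller than the order of `ω`, and they are nonzero since `ω` has finite order. -/

theorem pow_mod_orderOf_mul {M : Type*} [Monoid M] (x : M) (k j : ℕ) :
    x ^ (k % orderOf x * j) = (x ^ j) ^ k := by
  rw [pow_mul, pow_mod_orderOf, ← pow_mul, ← pow_mul, mul_comm]

theorem Matrix.det_of_pow_add {R : Type*} [CommRing R] {r : ℕ} (x : Fin r → R) (a : ℕ) :
    (of fun i j : Fin r => x j ^ (a + i)).det = (∏ j, x j ^ a) * (vandermonde x).det := by
  rw [← det_transpose (vandermonde x), ← det_mul_row]
  congr 1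
  ext i j
  simp [pow_add]

theorem fourier_consecutive_rows_MDS_general {F : Type*} [Field F] (n r a : ℕ) (hn : 0 < n)
    (ω : F) (hω : orderOf ω = n)
    (G : Matrix (Fin r) (Fin n) F)
    (hG : G = (Matrix.of fun i j : Fin n => ω ^ (i.val * j.val)).submatrix
        (fun i : Fin r => (⟨(a + i.val) % n, Nat.mod_lt _ hn⟩ : Fin n)) id) :
    ∀ c : Fin r → Fin n, Function.Injective c → (G.submatrix id c).det ≠ 0 := by
  intro c hc
  subst hG
  have hω0 : ω ≠ 0 := (orderOf_pos_iff.mp (hω ▸ hn)).isUnit.ne_zero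
  have hnodes : Function.Injective fun j => ω ^ (c j : ℕ) := fun i j h =>
    hc <| Fin.ext <| pow_injOn_Iio_orderOf (by simp [hω]) (by simp [hω]) h
  have hminor : ((Matrix.of fun i j : Fin n => ω ^ (i.val * j.val)).submatrix
      (fun i : Fin r => (⟨(a + i.val) % n, Nat.mod_lt _ hn⟩ : Fin n)) id).submatrix id c =
      Matrix.of fun i j : Fin r => (ω ^ (c j : ℕ)) ^ (a + i) := by
    ext i j
    exact hω ▸ pow_mod_orderOf_mul ω (a + i) (c j)
  rw [hminor, Matrix.det_of_pow_add]
  exact mul_ne_zero (Finset.prod_ne_zero_iff.mpr fun j _ => pow_ne_zero _ (pow_ne_zero _ hω0))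
    (Matrix.det_vandermonde_ne_zero_iff.mpr hnodes)

theorem fourier_consecutive_rows_MDS {F : Type*} [Field F] (n r a : ℕ) (hn : 0 < n)
    (hr : 1 ≤ r) (hrn : r ≤ n) (ω : F) (hω : orderOf ω = n)
    (G : Matrix (Fin r) (Fin n) F)
    (hG : G = (Matrix.of fun i j : Fin n => ω ^ (i.val * j.val)).submatrix
        (fun i : Fin r => (⟨(a + i.val) % n, Nat.mod_lt _ hn⟩ : Fin n)) id) :
    ∀ c : Fin r → Fin n, Function.Injective c → (G.submatrix id c).det ≠ 0 :=
  fourier_consecutive_rows_MDS_general n r a hn ω hω G hG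
end

section
/- Let ω be a primitive n-th root of unity in a field F, let k satisfy gcd(n,k)=1, and let G be the r×n matrix whose rows are rows a, a+k, a+2k, ..., a+(r-1)k (indices mod n) of the Fourier matrix F_n. Then the code generated by G is an MDS (n, r, n-r+1) code. -/
theorem fourier_arith_rows_MDS {F : Type*} [Field F] (n r a k : ℕ) (hn : 0 < n)
    (hr : 1 ≤ r) (hrn : r ≤ n) (hk : Nat.gcd n k = 1)
    (ω : F) (hω : orderOf ω = n)
    (G : Matrix (Fin r) (Fin n) F)
    (hG : G = (Matrix.of fun i j : Fin n => ω ^ (i.val * j.val)).submatrix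
        (fun i : Fin r => (⟨(a + i.val * k) % n, Nat.mod_lt _ hn⟩ : Fin n)) id) :
    ∀ c : Fin r → Fin n, Function.Injective c → (G.submatrix id c).det ≠ 0 := by
  intro c hc
  subst hG
  have hω1 : ω ^ n = 1 := by rw [← hω]; exact pow_orderOf_eq_one ω
  have hωne : ω ≠ 0 := by
    intro h
    rw [h, zero_pow hn.ne'] at hω1
    exact zero_ne_one hω1
  have key : ∀ s t : ℕ, s % n = t % n → ω ^ s = ω ^ t := by
    intro s t hst
    conv_lhs => rw [← Nat.div_add_mod s n]
    conv_rhs => rw [← Nat.div_add_mod t n]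
    rw [pow_add, pow_add, pow_mul, pow_mul, hω1, one_pow, one_pow, hst]
  set u : Fˣ := Units.mk0 ω hωne with hu
  have hou : orderOf u = n := by rw [← orderOf_units]; simpa [hu] using hω
  set y : Fin r → F := fun j => ω ^ ((c j).val * k) with hy
  have hinj : Function.Injective y := by
    intro j1 j2 h
    have hm : (c j1).val * k ≡ (c j2).val * k [MOD n] := by
      have h' : u ^ ((c j1).val * k) = u ^ ((c j2).val * k) := by
        ext; simpa [hu] using h
      have := pow_eq_pow_iff_modEq.mp h'
      rwa [hou] at this
    have h2 : (c j1).val ≡ (c j2).val [MOD n] :=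
      Nat.ModEq.cancel_right_of_coprime hk hm
    apply hc
    apply Fin.ext
    have e1 : (c j1).val % n = (c j1).val := Nat.mod_eq_of_lt (c j1).isLt
    have e2 : (c j2).val % n = (c j2).val := Nat.mod_eq_of_lt (c j2).isLt
    rw [← e1, ← e2]; exact h2
  have hM : ((Matrix.of fun i j : Fin n => ω ^ (i.val * j.val)).submatrix
        (fun i : Fin r => (⟨(a + i.val * k) % n, Nat.mod_lt _ hn⟩ : Fin n)) id).submatrix id c
      = Matrix.transpose (Matrix.of fun j i : Fin r => ω ^ ((c j).val * a) * Matrix.vandermonde y j i) := by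
    ext i j
    simp only [Matrix.submatrix_apply, Matrix.of_apply, Matrix.transpose_apply, id,
      Matrix.vandermonde_apply, hy]
    rw [← pow_mul, ← pow_add]
    apply key
    show _ ≡ _ [MOD n]
    calc ((a + i.val * k) % n) * (c j).val
        ≡ (a + i.val * k) * (c j).val [MOD n] :=
          Nat.ModEq.mul_right _ (Nat.mod_modEq _ _)
      _ = (c j).val * a + (c j).val * k * i.val := by ring
  rw [hM, Matrix.det_transpose, Matrix.det_mul_column]
  apply mul_ne_zero
  · exact Finset.prod_ne_zero_iff.mpr fun j _ => pow_ne_zero _ hωne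
  · exact Matrix.det_vandermonde_ne_zero_iff.mpr hinj
end
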